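/- If x is obtained from y by a uniform-on-the-left (UL) progressive transfer, then for every f in the class F that is star-shaped from above at 1, the extended Gini social welfare satisfies W_f(x) ≥ W_f(y). -/

import Mathlib

/-- `x` is obtained from `y` by a uniform-on-the-left (UL) progressive
transfer. Since indices are 0-based, position `h : Fin n` has `h + 1`
individuals at or below it, so the mean-preservation condition reads
`(h + 1) · δ = ε`. -/
def ULTransfer {n : ℕ} (x y : Fin n → ℝ) : Prop :=
  Monotone x ∧ Monotone y ∧
  ∃ δ ε : ℝ, 0 < δ ∧ 0 < ε ∧ ∃ h k : Fin n, h < k ∧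
    (∀ i : Fin n, i ≤ h → x i = y i + δ) ∧
    x k = y k - ε ∧
    (∀ g : Fin n, h < g → g ≠ k → x g = y g) ∧
    ((h : ℕ) + 1 : ℝ) * δ = ε

/-- Membership in the class F: `f : [0,1] → [0,1]` continuous, nondecreasing,
with `f 0 = 0` and `f 1 = 1`. -/
def MemF (f : ℝ → ℝ) : Prop :=
  ContinuousOn f (Set.Icc 0 1) ∧ MonotoneOn f (Set.Icc 0 1) ∧
  f 0 = 0 ∧ f 1 = 1 ∧ ∀ t ∈ Set.Icc (0 : ℝ) 1, f t ∈ Set.Icc (0 : ℝ) 1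

/-- `f` is star-shaped (from above) at `ξ ∈ [0,1]`. -/
def StarShapedAt (f : ℝ → ℝ) (ξ : ℝ) : Prop :=
  ∀ s t : ℝ, s ∈ Set.Icc (0 : ℝ) 1 → t ∈ Set.Icc (0 : ℝ) 1 → s ≠ ξ → t ≠ ξ → s < t →
    (f s - f ξ) / (s - ξ) ≤ (f t - f ξ) / (t - ξ)

/-- Extended Gini social welfare. -/
noncomputable def W {n : ℕ} (f : ℝ → ℝ) (z : Fin n → ℝ) : ℝ :=
  ∑ i : Fin n, (f (((n : ℝ) - (i : ℕ)) / n) - f (((n : ℝ) - (i : ℕ) - 1) / n)) * z i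

/-! Since `W f` is linear, a UL transfer changes welfare by `δ (f 1 - f a) - (h + 1) δ (f b - f c)`
with `a = (n - h - 1)/n`, `b = (n - k)/n`, `c = (n - k - 1)/n`: the weights of the incomes
`i ≤ h` telescope. Star-shapedness at `1` makes the slope of the chord from `s` to `1`
nondecreasing in `s`, whence slope on `[c, b]` ≤ slope on `[b, 1]` ≤ slope on `[a, 1]`. As
`b - c = 1/n` and `1 - a = (h + 1)/n`, this is exactly `(h + 1) (f b - f c) ≤ f 1 - f a`. -/

open Finset

section Slope

variable {f : ℝ → ℝ} {a b c ξ : ℝ}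

theorem slope_le_slope_of_slope_le_slope (hcb : c < b) (hbξ : b < ξ)
    (h : slope f c ξ ≤ slope f b ξ) : slope f c b ≤ slope f b ξ := by
  have hcomb := sub_div_sub_smul_slope_add_sub_div_sub_smul_slope f c b ξ
  simp only [smul_eq_mul] at hcomb
  have hp : 0 < (b - c) / (ξ - c) := div_pos (by linarith) (by linarith)
  have hpq : (b - c) / (ξ - c) + (ξ - b) / (ξ - c) = 1 := by
    field_simp [(by linarith : ξ - c ≠ 0)]
    ring
  have hS := congrArg (· * slope f b ξ) hpq
  simp only [add_mul, one_mul] at hS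
  exact le_of_mul_le_mul_left (by linarith) hp

theorem StarShapedAt.slope_le (hf : StarShapedAt f ξ) {s t : ℝ} (hs : s ∈ Set.Icc 0 1)
    (ht : t ∈ Set.Icc 0 1) (hsξ : s ≠ ξ) (htξ : t ≠ ξ) (hst : s ≤ t) :
    slope f ξ s ≤ slope f ξ t := by
  rcases hst.eq_or_lt with rfl | hst
  · rfl
  · simpa only [slope_def_field] using hf s t hs ht hsξ htξ hst

theorem StarShapedAt.slope_le_slope (hf : StarShapedAt f ξ) (hξ : ξ ≤ 1) (hc : 0 ≤ c)
    (hcb : c < b) (hba : b ≤ a) (haξ : a < ξ) : slope f c b ≤ slope f a ξ := by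
  have hmem : ∀ {s}, 0 ≤ s → s < ξ → s ∈ Set.Icc (0 : ℝ) 1 := fun h0 h1 => ⟨h0, by linarith⟩
  have hb : b ∈ Set.Icc (0 : ℝ) 1 := hmem (by linarith) (by linarith)
  calc slope f c b ≤ slope f b ξ := by
        refine slope_le_slope_of_slope_le_slope hcb (by linarith) ?_
        rw [slope_comm f c, slope_comm f b]
        exact hf.slope_le (hmem hc (by linarith)) hb (by linarith) (by linarith) hcb.le
    _ = slope f ξ b := slope_comm f b ξ
    _ ≤ slope f ξ a := hf.slope_le hb (hmem (by linarith) haξ) (by linarith) haξ.ne hba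
    _ = slope f a ξ := slope_comm f ξ a

end Slope

theorem StarShapedAt.succ_mul_sub_le {f : ℝ → ℝ} {n m k : ℕ} (hf : StarShapedAt f 1)
    (hmk : m < k) (hkn : k < n) :
    ((m : ℝ) + 1) * (f ((n - k) / n) - f ((n - k - 1) / n)) ≤ f 1 - f ((n - (m + 1)) / n) := by
  have hn : (0 : ℝ) < n := by exact_mod_cast Nat.zero_lt_of_lt hkn
  have hkn' : (k : ℝ) + 1 ≤ n := by exact_mod_cast hkn
  have hmk' : (m : ℝ) + 1 ≤ k := by exact_mod_cast hmk
  have hbc : (n - k) / n - (n - k - 1) / n = 1 / (n : ℝ) := by ring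
  have ha : 1 - (n - (m + 1)) / n = (m + 1) / (n : ℝ) := by field_simp; ring
  set a : ℝ := (n - (m + 1)) / n
  set b : ℝ := (n - k) / n
  set c : ℝ := (n - k - 1) / n
  have hslope : slope f c b ≤ slope f a 1 := hf.slope_le_slope le_rfl
    (div_nonneg (by linarith) hn.le) (div_lt_div_of_pos_right (by linarith) hn)
    (div_le_div_of_nonneg_right (by linarith) hn.le)
    ((div_lt_one hn).2 (by linarith [m.cast_nonneg (α := ℝ)]))
  calc ((m : ℝ) + 1) * (f b - f c) = (m + 1) / n * slope f c b := by
        rw [← vsub_eq_sub, ← sub_smul_slope, smul_eq_mul, hbc]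
        ring
    _ ≤ (m + 1) / n * slope f a 1 := mul_le_mul_of_nonneg_left hslope (by positivity)
    _ = f 1 - f a := by rw [← vsub_eq_sub, ← sub_smul_slope, smul_eq_mul, ha]

theorem W_sub {n : ℕ} (f : ℝ → ℝ) (u v : Fin n → ℝ) : W f (u - v) = W f u - W f v := by
  simp only [W, Pi.sub_apply, mul_sub, sum_sub_distrib]

theorem W_smul {n : ℕ} (f : ℝ → ℝ) (c : ℝ) (u : Fin n → ℝ) : W f (c • u) = c * W f u := by
  simp only [W, Pi.smul_apply, smul_eq_mul, mul_sum, mul_left_comm]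

theorem W_single {n : ℕ} (f : ℝ → ℝ) (k : Fin n) :
    W f (Pi.single k 1) = f ((n - k) / n) - f ((n - k - 1) / n) := by
  simp [W, Pi.single_apply]

theorem W_ite_le {n : ℕ} (f : ℝ → ℝ) (h : Fin n) :
    W f (fun i => if i ≤ h then 1 else 0) = f 1 - f ((n - (h + 1)) / n) := by
  have hn : (n : ℝ) ≠ 0 := by have := h.pos; positivity
  set g : ℕ → ℝ := fun j => f ((n - j) / n)
  calc W f (fun i => if i ≤ h then 1 else 0) = ∑ i ∈ Iic h, (g i - g (i + 1)) := by
        simp only [W, mul_ite, mul_one, mul_zero, ← sum_filter, filter_ge_eq_Iic, g]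
        refine sum_congr rfl fun i _ => ?_
        rw [Nat.cast_succ, sub_add_eq_sub_sub]
    _ = ∑ j ∈ range (h + 1), (g j - g (j + 1)) := by
        rw [Nat.range_succ_eq_Iic, ← Fin.map_valEmbedding_Iic, sum_map]
        rfl
    _ = g 0 - g (h + 1) := sum_range_sub' g _
    _ = _ := by simp [g, hn]

theorem ULTransfer.exists_sub_eq {n : ℕ} {x y : Fin n → ℝ} (hUL : ULTransfer x y) :
    ∃ δ > 0, ∃ h k : Fin n, h < k ∧
      x - y = δ • (fun i => if i ≤ h then 1 else 0) - (((h : ℕ) + 1 : ℝ) * δ) • Pi.single k 1 := by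
  obtain ⟨-, -, δ, ε, hδ, -, h, k, hhk, hle, hk, hgt, rfl⟩ := hUL
  refine ⟨δ, hδ, h, k, hhk, funext fun i => ?_⟩
  by_cases hih : i ≤ h
  · have hik : i ≠ k := (hih.trans_lt hhk).ne
    simp [hle i hih, hih, hik]
  · by_cases hik : i = k
    · subst hik
      simp [hk, hih]
    · simp [hgt i (not_le.1 hih) hik, hih, hik]

theorem stmt14_general {n : ℕ} (x y : Fin n → ℝ)
    (hUL : ULTransfer x y)
    (f : ℝ → ℝ) (hstar : StarShapedAt f 1) :
    W f x ≥ W f y := by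
  obtain ⟨δ, hδ, h, k, hhk, hxy⟩ := hUL.exists_sub_eq
  have hgap := hstar.succ_mul_sub_le (n := n) hhk k.isLt
  rw [ge_iff_le, ← sub_nonneg, ← W_sub, hxy, W_sub, W_smul, W_smul, W_ite_le, W_single]
  linarith [mul_le_mul_of_nonneg_left hgap hδ.le]

theorem stmt14 {n : ℕ} (hn : 2 ≤ n) (x y : Fin n → ℝ)
    (hUL : ULTransfer x y)
    (f : ℝ → ℝ) (hF : MemF f) (hstar : StarShapedAt f 1) :
    W f x ≥ W f y :=
  stmt14_general x y hUL f hstar
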